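/- Let (u,v) be a smooth solution of the CCCH system on [0,T) with m = u - u_{xx}, n = v - v_{xx}. If m(·,0) ≥ 0 and n(·,0) ≥ 0 everywhere (respectively ≤ 0), then m(·,t) ≥ 0 and n(·,t) ≥ 0 (respectively ≤ 0) everywhere for all t ∈ [0,T). -/

import Mathlib

open MeasureTheory Real Set

private lemma pd_smooth {F : ℝ × ℝ → ℝ} (hF : ContDiff ℝ (⊤ : ℕ∞) F) (w : ℝ × ℝ) :
    ContDiff ℝ (⊤ : ℕ∞) (fun q => fderiv ℝ F q w) :=
  (hF.fderiv_right (by simp)).clm_apply contDiff_const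

private lemma pd_x {F : ℝ × ℝ → ℝ} (hF : ContDiff ℝ (⊤ : ℕ∞) F) (x t : ℝ) :
    HasDerivAt (fun x' => F (x', t)) (fderiv ℝ F (x, t) (1, 0)) x := by
  have h1 : HasDerivAt (fun x' : ℝ => ((x', t) : ℝ × ℝ)) ((1 : ℝ), (0 : ℝ)) x :=
    (hasDerivAt_id x).prodMk (hasDerivAt_const x t)
  exact (hF.differentiable (by simp) (x, t)).hasFDerivAt.comp_hasDerivAt x h1

private lemma pd_t {F : ℝ × ℝ → ℝ} (hF : ContDiff ℝ (⊤ : ℕ∞) F) (x t : ℝ) :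
    HasDerivAt (fun τ => F (x, τ)) (fderiv ℝ F (x, t) (0, 1)) t := by
  have h1 : HasDerivAt (fun τ : ℝ => ((x, τ) : ℝ × ℝ)) ((0 : ℝ), (1 : ℝ)) t :=
    (hasDerivAt_const t x).prodMk (hasDerivAt_id t)
  exact (hF.differentiable (by simp) (x, t)).hasFDerivAt.comp_hasDerivAt t h1

private lemma ode_nonneg {t₀ : ℝ} (ht₀ : 0 ≤ t₀) {g a : ℝ → ℝ}
    (hg : ContinuousOn g (Icc 0 t₀)) (ha : ContinuousOn a (Icc 0 t₀))
    (hde : ∀ t ∈ Icc (0:ℝ) t₀, HasDerivAt g (a t * g t) t)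
    (h0 : 0 ≤ g 0) : 0 ≤ g t₀ := by
  by_contra h
  push_neg at h
  obtain ⟨t₁, ht₁mem, ht₁⟩ : ∃ t₁ ∈ Icc (0:ℝ) t₀, g t₁ = 0 := by
    have := intermediate_value_Icc' ht₀ hg (show (0:ℝ) ∈ Icc (g t₀) (g 0) from ⟨le_of_lt h, h0⟩)
    obtain ⟨t₁, ht₁mem, ht₁⟩ := this
    exact ⟨t₁, ht₁mem, ht₁⟩
  obtain ⟨K, hK⟩ := isCompact_Icc.exists_bound_of_continuousOn ha
  have hsub : Icc t₁ t₀ ⊆ Icc 0 t₀ := Icc_subset_Icc ht₁mem.1 le_rfl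
  have hbnd := norm_le_gronwallBound_of_norm_deriv_right_le (δ := 0) (K := K) (ε := 0)
    (hg.mono hsub)
    (fun t ht => (hde t (hsub (Ico_subset_Icc_self ht))).hasDerivWithinAt)
    (by rw [ht₁]; simp)
    (fun t ht => by
      have := hK t (hsub (Ico_subset_Icc_self ht))
      rw [Real.norm_eq_abs] at this
      simp only [Real.norm_eq_abs, abs_mul, add_zero]
      exact mul_le_mul_of_nonneg_right this (abs_nonneg _))
  have := hbnd t₀ ⟨ht₁mem.2, le_rfl⟩
  rw [gronwallBound_ε0_δ0] at this
  have : g t₀ = 0 := by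
    have h2 : |g t₀| ≤ 0 := this
    simpa using abs_nonpos_iff.mp (le_antisymm h2 (abs_nonneg _) ▸ le_rfl) 
  linarith

private lemma key_nonneg (T : ℝ) (v m φ : ℝ → ℝ → ℝ)
    (hv : ContDiff ℝ (⊤ : ℕ∞) (fun q : ℝ × ℝ => v q.1 q.2))
    (hms : ContDiff ℝ (⊤ : ℕ∞) (fun q : ℝ × ℝ => m q.1 q.2))
    (heq : ∀ x : ℝ, ∀ t ∈ Set.Ico (0:ℝ) T,
      deriv (fun τ => m x τ) t + 2 * deriv (fun x' => v x' t) x * m x t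
        + v x t * deriv (fun x' => m x' t) x = 0)
    (hφ : ∀ x : ℝ, ∀ t ∈ Set.Ico (0:ℝ) T, HasDerivAt (fun τ => φ x τ) (v (φ x t) t) t)
    (hφ0 : ∀ x, φ x 0 = x)
    (hsurj : ∀ t ∈ Set.Ico (0:ℝ) T, Function.Surjective (fun x => φ x t))
    (h0 : ∀ x, 0 ≤ m x 0) :
    ∀ x : ℝ, ∀ t ∈ Set.Ico (0:ℝ) T, 0 ≤ m x t := by
  have main : ∀ x : ℝ, ∀ t₀ ∈ Set.Ico (0:ℝ) T, 0 ≤ m (φ x t₀) t₀ := by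
    intro x t₀ ht₀
    set V : ℝ × ℝ → ℝ := fun q => v q.1 q.2 with hVdef
    set M : ℝ × ℝ → ℝ := fun q => m q.1 q.2 with hMdef
    set c : ℝ → ℝ × ℝ := fun τ => (φ x τ, τ) with hcdef
    set g : ℝ → ℝ := fun τ => m (φ x τ) τ with hgdef
    set a : ℝ → ℝ := fun τ => -(2 * fderiv ℝ V (c τ) (1, 0)) with hadef
    have hsub : Icc (0:ℝ) t₀ ⊆ Ico 0 T := fun s hs => ⟨hs.1, lt_of_le_of_lt hs.2 ht₀.2⟩
    have hde : ∀ t ∈ Icc (0:ℝ) t₀, HasDerivAt g (a t * g t) t := by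
      intro t ht
      have ht' : t ∈ Ico (0:ℝ) T := hsub ht
      have hct : HasDerivAt c (v (φ x t) t, (1:ℝ)) t :=
        (hφ x t ht').prodMk (hasDerivAt_id t)
      have hg1 : HasDerivAt g (fderiv ℝ M (c t) (v (φ x t) t, 1)) t :=
        (hms.differentiable (by simp) (c t)).hasFDerivAt.comp_hasDerivAt t hct
      have hvec : ((v (φ x t) t, (1:ℝ)) : ℝ × ℝ)
          = v (φ x t) t • ((1:ℝ), (0:ℝ)) + ((0:ℝ), (1:ℝ)) := by
        simp [Prod.ext_iff]
      have hDval : fderiv ℝ M (c t) (v (φ x t) t, 1)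
          = v (φ x t) t * fderiv ℝ M (c t) (1, 0) + fderiv ℝ M (c t) (0, 1) := by
        rw [hvec, map_add, (fderiv ℝ M (c t)).map_smul, smul_eq_mul]
      have hmx : deriv (fun x' => m x' t) (φ x t) = fderiv ℝ M (c t) (1, 0) :=
        HasDerivAt.deriv (pd_x hms (φ x t) t)
      have hmt : deriv (fun τ => m (φ x t) τ) t = fderiv ℝ M (c t) (0, 1) :=
        HasDerivAt.deriv (pd_t hms (φ x t) t)
      have hvx : deriv (fun x' => v x' t) (φ x t) = fderiv ℝ V (c t) (1, 0) :=
        HasDerivAt.deriv (pd_x hv (φ x t) t)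
      have heqpt := heq (φ x t) t ht'
      have hag : a t * g t = fderiv ℝ M (c t) (v (φ x t) t, 1) := by
        rw [hDval, ← hmx, ← hmt]
        have : g t = m (φ x t) t := rfl
        rw [hadef]
        simp only [← hvx, this]
        nlinarith [heqpt]
      rw [hag]
      exact hg1
    have hgc : ContinuousOn g (Icc 0 t₀) :=
      fun t ht => ((hde t ht).continuousAt).continuousWithinAt
    have hcc : ContinuousOn c (Icc 0 t₀) := fun t ht =>
      (((hφ x t (hsub ht)).prodMk (hasDerivAt_id t)).continuousAt).continuousWithinAt
    have hac : ContinuousOn a (Icc 0 t₀) := by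
      have : ContinuousOn (fun τ => fderiv ℝ V (c τ) (1, 0)) (Icc 0 t₀) :=
        (pd_smooth hv ((1:ℝ), (0:ℝ))).continuous.comp_continuousOn hcc
      exact (continuousOn_const.mul this).neg
    have h0' : 0 ≤ g 0 := by simpa [hgdef, hφ0 x] using h0 x
    have := ode_nonneg ht₀.1 hgc hac hde h0'
    simpa [hgdef] using this
  intro x t ht
  obtain ⟨x₀, hx₀⟩ := hsurj t ht x
  have := main x₀ t ht
  simp only at hx₀
  rwa [hx₀] at this

private lemma smooth_of_m {u m : ℝ → ℝ → ℝ}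
    (hu : ContDiff ℝ (⊤ : ℕ∞) (fun q : ℝ × ℝ => u q.1 q.2))
    (hm : ∀ x t, m x t = u x t - deriv (deriv (fun x' => u x' t)) x) :
    ContDiff ℝ (⊤ : ℕ∞) (fun q : ℝ × ℝ => m q.1 q.2) := by
  set U : ℝ × ℝ → ℝ := fun q => u q.1 q.2 with hU
  set U1 : ℝ × ℝ → ℝ := fun q => fderiv ℝ U q (1, 0) with hU1
  have hU1s : ContDiff ℝ (⊤ : ℕ∞) U1 := pd_smooth hu _
  have key : ∀ q : ℝ × ℝ, m q.1 q.2 = U q - fderiv ℝ U1 q (1, 0) := by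
    rintro ⟨x, t⟩
    rw [hm]
    congr 1
    have h1 : deriv (fun x' => u x' t) = fun x' => U1 (x', t) := by
      funext y
      exact HasDerivAt.deriv (pd_x hu y t)
    rw [h1]
    exact HasDerivAt.deriv (pd_x hU1s x t)
  have : (fun q : ℝ × ℝ => m q.1 q.2) = fun q => U q - fderiv ℝ U1 q (1, 0) :=
    funext key
  rw [this]
  exact hu.sub (pd_smooth hU1s _)

/-- sign preservation for the momenta `m`, `n` of the CCCH system. -/
theorem stmt6 (T : ℝ) (hT : 0 < T) (u v m n φ ξ : ℝ → ℝ → ℝ)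
    (hu : ContDiff ℝ (⊤ : ℕ∞) (fun q : ℝ × ℝ => u q.1 q.2))
    (hv : ContDiff ℝ (⊤ : ℕ∞) (fun q : ℝ × ℝ => v q.1 q.2))
    (hφs : ContDiff ℝ (⊤ : ℕ∞) (fun q : ℝ × ℝ => φ q.1 q.2))
    (hξs : ContDiff ℝ (⊤ : ℕ∞) (fun q : ℝ × ℝ => ξ q.1 q.2))
    (hm : ∀ x t, m x t = u x t - deriv (deriv (fun x' => u x' t)) x)
    (hn : ∀ x t, n x t = v x t - deriv (deriv (fun x' => v x' t)) x)
    (heq1 : ∀ x : ℝ, ∀ t ∈ Set.Ico (0:ℝ) T,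
      deriv (fun τ => m x τ) t + 2 * deriv (fun x' => v x' t) x * m x t
        + v x t * deriv (fun x' => m x' t) x = 0)
    (heq2 : ∀ x : ℝ, ∀ t ∈ Set.Ico (0:ℝ) T,
      deriv (fun τ => n x τ) t + 2 * deriv (fun x' => u x' t) x * n x t
        + u x t * deriv (fun x' => n x' t) x = 0)
    (hφ : ∀ x : ℝ, ∀ t ∈ Set.Ico (0:ℝ) T, HasDerivAt (fun τ => φ x τ) (v (φ x t) t) t)
    (hφ0 : ∀ x, φ x 0 = x)
    (hξ : ∀ x : ℝ, ∀ t ∈ Set.Ico (0:ℝ) T, HasDerivAt (fun τ => ξ x τ) (u (ξ x t) t) t)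
    (hξ0 : ∀ x, ξ x 0 = x)
    (hφbij : ∀ t ∈ Set.Ico (0:ℝ) T, Function.Bijective (fun x => φ x t))
    (hξbij : ∀ t ∈ Set.Ico (0:ℝ) T, Function.Bijective (fun x => ξ x t)) :
    (((∀ x, 0 ≤ m x 0) ∧ (∀ x, 0 ≤ n x 0)) →
        ∀ x : ℝ, ∀ t ∈ Set.Ico (0:ℝ) T, 0 ≤ m x t ∧ 0 ≤ n x t) ∧
    (((∀ x, m x 0 ≤ 0) ∧ (∀ x, n x 0 ≤ 0)) →
        ∀ x : ℝ, ∀ t ∈ Set.Ico (0:ℝ) T, m x t ≤ 0 ∧ n x t ≤ 0) := by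
  have hM : ContDiff ℝ (⊤ : ℕ∞) (fun q : ℝ × ℝ => m q.1 q.2) := smooth_of_m hu hm
  have hN : ContDiff ℝ (⊤ : ℕ∞) (fun q : ℝ × ℝ => n q.1 q.2) := smooth_of_m hv hn
  have hφsurj : ∀ t ∈ Set.Ico (0:ℝ) T, Function.Surjective (fun x => φ x t) :=
    fun t ht => (hφbij t ht).2
  have hξsurj : ∀ t ∈ Set.Ico (0:ℝ) T, Function.Surjective (fun x => ξ x t) :=
    fun t ht => (hξbij t ht).2
  -- equations for the negated momenta
  have heq1' : ∀ x : ℝ, ∀ t ∈ Set.Ico (0:ℝ) T,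
      deriv (fun τ => -m x τ) t + 2 * deriv (fun x' => v x' t) x * (-m x t)
        + v x t * deriv (fun x' => -m x' t) x = 0 := by
    intro x t ht
    have h := heq1 x t ht
    rw [deriv.fun_neg, deriv.fun_neg]
    linarith
  have heq2' : ∀ x : ℝ, ∀ t ∈ Set.Ico (0:ℝ) T,
      deriv (fun τ => -n x τ) t + 2 * deriv (fun x' => u x' t) x * (-n x t)
        + u x t * deriv (fun x' => -n x' t) x = 0 := by
    intro x t ht
    have h := heq2 x t ht
    rw [deriv.fun_neg, deriv.fun_neg]
    linarith
  constructor
  · rintro ⟨hm0, hn0⟩ x t ht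
    exact ⟨key_nonneg T v m φ hv hM heq1 hφ hφ0 hφsurj hm0 x t ht,
      key_nonneg T u n ξ hu hN heq2 hξ hξ0 hξsurj hn0 x t ht⟩
  · rintro ⟨hm0, hn0⟩ x t ht
    constructor
    · have := key_nonneg T v (fun x t => -m x t) φ hv hM.neg heq1' hφ hφ0 hφsurj
        (fun x => neg_nonneg.2 (hm0 x)) x t ht
      linarith
    · have := key_nonneg T u (fun x t => -n x t) ξ hu hN.neg heq2' hξ hξ0 hξsurj
        (fun x => neg_nonneg.2 (hn0 x)) x t ht
      linarith
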